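/- arXiv:1109.3137 — 2 statements merged into one kernel-verified Lean document; each statement's English description precedes it below -/
import Mathlib

section
/- Suppose Ḡ₀, the completion of G under the metric d₀ induced by edge weights R₀, is weakly connected, and let R₁ be edge weights with R₁(u,v) ≤ R₀(u,v) for every edge. Then the pseudometric d₁ on Ḡ₀ induced by R₁ is a metric; moreover, if (Ḡ₀, d₀) is compact then the identity map (Ḡ₀,d₀) → (Ḡ₀,d₁) is a homeomorphism. -/
open UniformSpace Filter Topology
open scoped ENNReal

noncomputable section

/-- A locally finite edge-weighted (resistance) graph. -/
structure WGraph (V : Type*) where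
  Adj : V → V → Prop
  symm : ∀ u v, Adj u v → Adj v u
  loopless : ∀ v, ¬ Adj v v
  R : V → V → ℝ
  Rsymm : ∀ u v, R u v = R v u
  Rpos : ∀ u v, Adj u v → 0 < R u v
  locFin : ∀ v, {u | Adj u v}.Finite

namespace WGraph

variable {V : Type*} (G : WGraph V)

/-- The set of edges, as unordered pairs of vertices. -/
def edgeSet : Set (Sym2 V) := {e | ∃ u v, G.Adj u v ∧ e = s(u, v)}

/-- The set of total lengths of finite paths joining `u` to `v`. -/
def pathLengths (u v : V) : Set ℝ :=
  {L | ∃ (n : ℕ) (p : ℕ → V), p 0 = u ∧ p n = v ∧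
        (∀ k < n, G.Adj (p k) (p (k + 1))) ∧
        L = ∑ k ∈ Finset.range n, G.R (p k) (p (k + 1))}

/-- `G` is connected: any two vertices are joined by a finite path. -/
def Connected : Prop := ∀ u v : V, (G.pathLengths u v).Nonempty

/-- The metric on the vertex set is the minimal resistance path metric of `G`. -/
def IsPathMetric [MetricSpace V] : Prop :=
  ∀ u v : V, dist u v = sInf (G.pathLengths u v)

/-- Eventually flat functions: the values differ across only finitely many edges. -/
def EventuallyFlat (φ : V → ℝ) : Prop :=
  {p : V × V | G.Adj p.1 p.2 ∧ φ p.1 ≠ φ p.2}.Finite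

open Classical in
/-- The conductance: the reciprocal resistance on edges, `0` off edges. -/
def cond (u v : V) : ℝ := if G.Adj u v then (G.R u v)⁻¹ else 0

/-- `f` is harmonic at `v`: its value is the conductance-weighted average of the
values at the adjacent vertices. -/
def HarmonicAt (f : V → ℝ) (v : V) : Prop :=
  f v = (∑ u ∈ (G.locFin v).toFinset, G.cond u v)⁻¹ *
          ∑ u ∈ (G.locFin v).toFinset, G.cond u v * f u

/-- The weighted `ℓ²(μ)` inner product. -/
def winner (μ : V → ℝ) (f g : V → ℝ) : ℝ := ∑' v, f v * g v * μ v

/-- The bilinear (energy) form associated to conductances `C`. -/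
def Bform (C : V → V → ℝ) (f g : V → ℝ) : ℝ :=
  (1 / 2) * ∑' p : V × V, C p.1 p.2 * (f p.1 - f p.2) * (g p.1 - g p.2)

/-- The formal Laplacian `Δ_μ`. -/
def lap (C : V → V → ℝ) (μ : V → ℝ) (f : V → ℝ) (v : V) : ℝ :=
  (1 / μ v) * ∑' u, C u v * (f v - f u)

/-- The (possibly infinite) energy of `f`. -/
def energy (C : V → V → ℝ) (f : V → ℝ) : ℝ≥0∞ :=
  (1 / 2) * ∑' p : V × V, ENNReal.ofReal (C p.1 p.2 * (f p.1 - f p.2) ^ 2)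

variable [MetricSpace V]

/-- A path in the completion `Ḡ` joining `x` and `y`: a two-sided sequence of
vertices (stationary steps are allowed, so this encodes finite paths, rays and
double rays) converging to `x` and `y` at its two ends. -/
structure CPath (x y : Completion V) where
  p : ℤ → V
  step : ∀ k, p k = p (k + 1) ∨ G.Adj (p k) (p (k + 1))
  tendsto_left : Tendsto (fun n : ℕ => ((p (-(n : ℤ)) : V) : Completion V)) atTop (nhds x)
  tendsto_right : Tendsto (fun n : ℕ => ((p (n : ℤ) : V) : Completion V)) atTop (nhds y)

end WGraph

/-- The path `γ` uses (contains) the edge `e`. -/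
def WGraph.CPath.uses {V : Type*} [MetricSpace V] {G : WGraph V}
    {x y : Completion V} (γ : G.CPath x y) (e : Sym2 V) : Prop :=
  ∃ k : ℤ, γ.p k ≠ γ.p (k + 1) ∧ e = s(γ.p k, γ.p (k + 1))

namespace WGraph

variable {V : Type*} (G : WGraph V) [MetricSpace V]

/-- The completion `Ḡ` is weakly connected: any two distinct points admit a
finite set of edges met by every path joining them. -/
def WeaklyConnected : Prop :=
  ∀ x y : Completion V, x ≠ y →
    ∃ W : Set (Sym2 V), W.Finite ∧ W ⊆ G.edgeSet ∧
      ∀ γ : G.CPath x y, ∃ e ∈ W, γ.uses e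

end WGraph

/-!
If `D₁ x y = 0` with `x ≠ y`, weak connectivity gives a finite set `W` of edges met by every
path from `x` to `y`; let `δ > 0` be the least `R₁`-weight on `W`. By continuity there are
vertices `u` near `x` and `v` near `y` joined by a path of `R₁`-length less than `δ`. A vertex
sequence converging to `x` in `d₀` can be chosen with consecutive points so `d₀`-close that
they are joined by paths of `R₀`-length, hence `R₁`-length, less than `δ`; this links `x` to
`u`, and likewise `v` to `y`. The resulting path from `x` to `y` uses only edges of
`R₁`-weight less than `δ`, yet has to cross `W`.

On a compact space a continuous definite `D₁` generates the topology: `D₁ x ·` attains a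
positive minimum on the closed complement of an open set containing `x`.
-/

section ChainConcat

variable {α : Type*} {S : α → α → Prop}

/-- Walking through blocks `n = 0, 1, …` whose points are indexed `0, …, m n`, passing from the
last point of a block to the first point of the next, `blockPos m k = (n, j)` is the position
reached after `k` steps. -/
def blockPos (m : ℕ → ℕ) : ℕ → ℕ × ℕ
  | 0 => (0, 0)
  | k + 1 =>
    if (blockPos m k).2 < m (blockPos m k).1 then ((blockPos m k).1, (blockPos m k).2 + 1)
    else ((blockPos m k).1 + 1, 0)

lemma blockPos_snd_le (m : ℕ → ℕ) (k : ℕ) : (blockPos m k).2 ≤ m (blockPos m k).1 := by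
  induction k with
  | zero => exact Nat.zero_le _
  | succ k ih =>
    rw [blockPos]
    split_ifs with h
    · exact h
    · exact Nat.zero_le _

lemma monotone_blockPos_fst (m : ℕ → ℕ) : Monotone fun k => (blockPos m k).1 := by
  refine monotone_nat_of_le_succ fun k => ?_
  rw [blockPos]
  split_ifs <;> simp

lemma blockPos_add_of_eq {m : ℕ → ℕ} {k n : ℕ} (hk : blockPos m k = (n, 0)) {i : ℕ}
    (hi : i ≤ m n) : blockPos m (k + i) = (n, i) := by
  induction i with
  | zero => exact hk
  | succ i ih =>
    rw [← add_assoc, blockPos, ih (by omega), if_pos (by simpa using hi)]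

lemma exists_blockPos_eq (m : ℕ → ℕ) (n : ℕ) : ∃ k, blockPos m k = (n, 0) := by
  induction n with
  | zero => exact ⟨0, rfl⟩
  | succ n ih =>
    obtain ⟨k, hk⟩ := ih
    refine ⟨k + m n + 1, ?_⟩
    rw [blockPos, blockPos_add_of_eq hk le_rfl, if_neg (lt_irrefl _)]

lemma tendsto_blockPos_fst (m : ℕ → ℕ) : Tendsto (fun k => (blockPos m k).1) atTop atTop :=
  tendsto_atTop_atTop_of_monotone (monotone_blockPos_fst m) fun n =>
    (exists_blockPos_eq m n).imp fun _ hk => by rw [hk]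

lemma concat_chains {m : ℕ → ℕ} {q : ℕ → ℕ → α}
    (hq : ∀ n, ∀ j < m n, S (q n j) (q n (j + 1))) (hlink : ∀ n, S (q n (m n)) (q (n + 1) 0))
    (k : ℕ) :
    S (q (blockPos m k).1 (blockPos m k).2) (q (blockPos m (k + 1)).1 (blockPos m (k + 1)).2) := by
  rw [blockPos]
  split_ifs with h
  · exact hq _ _ h
  · have hlast := hlink (blockPos m k).1
    rwa [← le_antisymm (blockPos_snd_le m k) (not_lt.1 h)] at hlast

lemma exists_chain_append {M : ℕ} {p f : ℕ → α} (hp : ∀ k < M, S (p k) (p (k + 1)))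
    (hf : ∀ k, S (f k) (f (k + 1))) (hpf : p M = f 0) :
    ∃ g : ℕ → α, g 0 = p 0 ∧ (∀ k, S (g k) (g (k + 1))) ∧ ∀ n, g (n + M) = f n := by
  refine ⟨fun k => if k < M then p k else f (k - M), ?_, fun k => ?_, fun n => ?_⟩
  · rcases Nat.eq_zero_or_pos M with rfl | hM
    · simp [hpf]
    · simp [hM]
  · rcases lt_trichotomy (k + 1) M with hk | hk | hk
    · simpa [hk, (Nat.lt_succ_self k).trans hk] using hp k (by omega)
    · simpa [hk, show k < M by omega, ← hpf] using hp k (by omega)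
    · simpa [show ¬ k < M by omega, show ¬ k + 1 < M by omega,
        show k + 1 - M = k - M + 1 by omega] using hf (k - M)
  · simp

lemma exists_int_chain (hS : ∀ a b, S a b → S b a) {b f : ℕ → α} (hb : ∀ k, S (b k) (b (k + 1)))
    (hf : ∀ k, S (f k) (f (k + 1))) (hbf : b 0 = f 0) :
    ∃ p : ℤ → α, (∀ k, S (p k) (p (k + 1))) ∧ (∀ n : ℕ, p (-n) = b n) ∧ ∀ n : ℕ, p n = f n := by
  refine ⟨fun k => if 0 ≤ k then f k.toNat else b (-k).toNat, fun k => ?_, fun n => ?_,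
    fun n => by simp⟩
  · rcases lt_or_ge k (-1) with hk | hk
    · simpa [show ¬ 0 ≤ k by omega, show ¬ 0 ≤ k + 1 by omega,
        show (-k).toNat = (-(k + 1)).toNat + 1 by omega] using hS _ _ (hb (-(k + 1)).toNat)
    rcases eq_or_lt_of_le hk with rfl | hk
    · simpa [hbf] using hS _ _ (hb 0)
    · simpa [show 0 ≤ k by omega, show 0 ≤ k + 1 by omega,
        show (k + 1).toNat = k.toNat + 1 by omega] using hf k.toNat
  · rcases Nat.eq_zero_or_pos n with rfl | hn
    · simp [hbf]
    · simp [show n ≠ 0 by omega]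

end ChainConcat

lemma isOpen_iff_forall_exists_lt_subset {X : Type*} [TopologicalSpace X] [CompactSpace X]
    {D : X → X → ℝ} (hD : ∀ x, Continuous (D x)) (hself : ∀ x, D x x = 0)
    (hpos : ∀ x y, x ≠ y → 0 < D x y) (s : Set X) :
    IsOpen s ↔ ∀ x ∈ s, ∃ ε > 0, {y | D x y < ε} ⊆ s := by
  refine ⟨fun hs x hx => ?_, fun h => isOpen_iff_mem_nhds.2 fun x hx => ?_⟩
  · rcases sᶜ.eq_empty_or_nonempty with hs' | hne
    · exact ⟨1, one_pos, fun y _ => Set.compl_empty_iff.1 hs' ▸ Set.mem_univ y⟩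
    obtain ⟨z, hz, hmin⟩ := hs.isClosed_compl.isCompact.exists_isMinOn hne (hD x).continuousOn
    refine ⟨D x z, hpos x z (ne_of_mem_of_not_mem hx hz), fun y hy => ?_⟩
    by_contra hys
    exact (hmin hys).not_gt hy.out
  · obtain ⟨ε, hε, hsub⟩ := h x hx
    exact Filter.mem_of_superset ((isOpen_lt (hD x) continuous_const).mem_nhds
      (by simpa [hself] using hε)) hsub

namespace WGraph

variable {V : Type*}

def FineStep (G : WGraph V) (δ : ℝ) (a b : V) : Prop := a = b ∨ (G.Adj a b ∧ G.R a b < δ)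

lemma nonneg_of_mem_pathLengths {G : WGraph V} {u v : V} {L : ℝ} (h : L ∈ G.pathLengths u v) :
    0 ≤ L := by
  obtain ⟨n, p, -, -, hstep, rfl⟩ := h
  exact Finset.sum_nonneg fun k hk => (G.Rpos _ _ (hstep k (Finset.mem_range.1 hk))).le

lemma bddBelow_pathLengths (G : WGraph V) (u v : V) : BddBelow (G.pathLengths u v) :=
  ⟨0, fun _ => nonneg_of_mem_pathLengths⟩

lemma sInf_pathLengths_nonneg (G : WGraph V) (u v : V) : 0 ≤ sInf (G.pathLengths u v) :=
  Real.sInf_nonneg fun _ => nonneg_of_mem_pathLengths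

lemma sInf_pathLengths_self (G : WGraph V) (u : V) : sInf (G.pathLengths u u) = 0 :=
  le_antisymm (csInf_le (G.bddBelow_pathLengths u u) ⟨0, fun _ => u, rfl, rfl, by simp, by simp⟩)
    (G.sInf_pathLengths_nonneg u u)

variable {G : WGraph V}

lemma FineStep.symm {δ : ℝ} {a b : V} (h : G.FineStep δ a b) : G.FineStep δ b a :=
  h.imp Eq.symm fun ⟨hab, hR⟩ => ⟨G.symm a b hab, G.Rsymm a b ▸ hR⟩

lemma FineStep.of_le {G' : WGraph V} (hadj : G'.Adj = G.Adj)
    (hle : ∀ u v, G.Adj u v → G'.R u v ≤ G.R u v) {δ : ℝ} {a b : V} (h : G.FineStep δ a b) :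
    G'.FineStep δ a b :=
  h.imp_right fun ⟨hab, hR⟩ => ⟨hadj ▸ hab, (hle a b hab).trans_lt hR⟩

lemma Connected.of_adj_eq {G' : WGraph V} (hadj : G'.Adj = G.Adj) (h : G.Connected) :
    G'.Connected := fun u v => by
  obtain ⟨-, n, p, hp0, hpn, hstep, -⟩ := h u v
  exact ⟨_, n, p, hp0, hpn, hadj ▸ hstep, rfl⟩

lemma edgeSet_eq_of_adj_eq {G' : WGraph V} (hadj : G'.Adj = G.Adj) : G'.edgeSet = G.edgeSet := by
  simp only [edgeSet, hadj]

lemma R_le_sum_of_path {n : ℕ} {p : ℕ → V} (hstep : ∀ k < n, G.Adj (p k) (p (k + 1)))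
    {j : ℕ} (hj : j < n) : G.R (p j) (p (j + 1)) ≤ ∑ k ∈ Finset.range n, G.R (p k) (p (k + 1)) :=
  Finset.single_le_sum (f := fun k => G.R (p k) (p (k + 1)))
    (fun k hk => (G.Rpos _ _ (hstep k (Finset.mem_range.1 hk))).le) (Finset.mem_range.2 hj)

lemma exists_path_sum_lt {u v : V} {b : ℝ} (hne : (G.pathLengths u v).Nonempty)
    (hb : sInf (G.pathLengths u v) < b) :
    ∃ (n : ℕ) (p : ℕ → V), p 0 = u ∧ p n = v ∧ (∀ k < n, G.Adj (p k) (p (k + 1))) ∧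
      ∑ k ∈ Finset.range n, G.R (p k) (p (k + 1)) < b := by
  obtain ⟨_, ⟨n, p, hp0, hpn, hstep, rfl⟩, hlt⟩ := exists_lt_of_csInf_lt hne hb
  exact ⟨n, p, hp0, hpn, hstep, hlt⟩

lemma fineStep_of_sum_lt {n : ℕ} {p : ℕ → V} (hstep : ∀ k < n, G.Adj (p k) (p (k + 1))) {δ : ℝ}
    (hδ : ∑ k ∈ Finset.range n, G.R (p k) (p (k + 1)) < δ) :
    ∀ k < n, G.FineStep δ (p k) (p (k + 1)) :=
  fun k hk => .inr ⟨hstep k hk, (R_le_sum_of_path hstep hk).trans_lt hδ⟩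

lemma exists_fineStep_path {u v : V} {δ : ℝ} (hne : (G.pathLengths u v).Nonempty)
    (hδ : sInf (G.pathLengths u v) < δ) :
    ∃ (n : ℕ) (p : ℕ → V), p 0 = u ∧ p n = v ∧ ∀ k < n, G.FineStep δ (p k) (p (k + 1)) := by
  obtain ⟨n, p, hp0, hpn, hstep, hsum⟩ := G.exists_path_sum_lt hne hδ
  exact ⟨n, p, hp0, hpn, fineStep_of_sum_lt hstep hsum⟩

lemma exists_pos_le_R_of_finite {W : Set (Sym2 V)} (hW : W.Finite) (hWE : W ⊆ G.edgeSet) :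
    ∃ δ > 0, ∀ a b, s(a, b) ∈ W → δ ≤ G.R a b := by
  let wt : Sym2 V → ℝ := Sym2.lift ⟨G.R, G.Rsymm⟩
  rcases W.eq_empty_or_nonempty with rfl | hne
  · exact ⟨1, one_pos, by simp⟩
  obtain ⟨e, he, hmin⟩ := W.exists_min_image wt hW hne
  obtain ⟨a, b, hab, rfl⟩ := hWE he
  exact ⟨G.R a b, G.Rpos a b hab, fun a' b' h => hmin _ h⟩

variable [MetricSpace V]

lemma dist_le_sum_of_path (hmet : G.IsPathMetric) {n : ℕ} {p : ℕ → V}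
    (hstep : ∀ k < n, G.Adj (p k) (p (k + 1))) {j : ℕ} (hj : j ≤ n) :
    dist (p 0) (p j) ≤ ∑ k ∈ Finset.range n, G.R (p k) (p (k + 1)) :=
  calc dist (p 0) (p j) ≤ ∑ k ∈ Finset.range j, G.R (p k) (p (k + 1)) :=
        hmet _ _ ▸ csInf_le (G.bddBelow_pathLengths _ _)
          ⟨j, p, rfl, rfl, fun k hk => hstep k (hk.trans_le hj), rfl⟩
    _ ≤ ∑ k ∈ Finset.range n, G.R (p k) (p (k + 1)) :=
        Finset.sum_le_sum_of_subset_of_nonneg (Finset.range_subset_range.2 hj)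
          fun k hk _ => (G.Rpos _ _ (hstep k (Finset.mem_range.1 hk))).le

lemma exists_fineStep_ray (hmet : G.IsPathMetric) (hconn : G.Connected) {z : Completion V}
    {a : V} {δ : ℝ} (ha : dist (a : Completion V) z < δ / 4) :
    ∃ r : ℕ → V, r 0 = a ∧ (∀ k, G.FineStep δ (r k) (r (k + 1))) ∧
      Tendsto (fun k => (r k : Completion V)) atTop (𝓝 z) := by
  set ε : ℕ → ℝ := fun n => δ / 4 * (1 / 2) ^ n with hε
  have hδ : 0 < δ := by linarith [dist_nonneg.trans_lt ha]
  have hεpos : ∀ n, 0 < ε n := fun n => by positivity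
  have hεsucc : ∀ n, ε (n + 1) = ε n / 2 := fun n => by simp only [hε, pow_succ]; ring
  have hεle : ∀ n, ε n ≤ δ / 4 := fun n =>
    mul_le_of_le_one_right (by positivity) (pow_le_one₀ (by norm_num) (by norm_num))
  obtain ⟨w, hw0, hwz⟩ : ∃ w : ℕ → V, w 0 = a ∧ ∀ n, dist (w n : Completion V) z < ε n := by
    choose w' hw' using fun n => Completion.denseRange_coe.exists_dist_lt z (hεpos n)
    refine ⟨Function.update w' 0 a, by simp, fun n => ?_⟩
    rcases n with _ | n
    · simpa [hε] using ha
    · simpa [dist_comm] using hw' (n + 1)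
  -- consecutive centres are `2 ε n`-close, so each is joined to the next by a path shorter
  -- than `3 ε n`, all of whose points lie within `4 ε n` of `z`
  have hblock : ∀ n, ∃ (m : ℕ) (q : ℕ → V), q 0 = w n ∧ q m = w (n + 1) ∧
      (∀ k < m, G.Adj (q k) (q (k + 1))) ∧
      ∑ k ∈ Finset.range m, G.R (q k) (q (k + 1)) < 3 * ε n := fun n => by
    refine G.exists_path_sum_lt (hconn _ _) ?_
    rw [← hmet, ← Completion.dist_eq]
    linarith [dist_triangle_right (w n : Completion V) (w (n + 1)) z, hwz n, hwz (n + 1),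
      hεsucc n, hεpos n]
  choose m q hq0 hqm hqadj hqsum using hblock
  have hqz : ∀ n, ∀ j ≤ m n, dist (q n j : Completion V) z < 4 * ε n := fun n j hj => by
    have := G.dist_le_sum_of_path hmet (hqadj n) hj
    rw [hq0, dist_comm, ← Completion.dist_eq] at this
    linarith [dist_triangle (q n j : Completion V) (w n) z, hwz n, hqsum n]
  refine ⟨fun k => q (blockPos m k).1 (blockPos m k).2, by simp [blockPos, hq0, hw0],
    concat_chains (fun n => fineStep_of_sum_lt (hqadj n) (by linarith [hqsum n, hεle n]))
      (fun n => .inl (by rw [hqm, hq0])), ?_⟩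
  rw [tendsto_iff_dist_tendsto_zero]
  refine squeeze_zero (fun _ => dist_nonneg) (fun k => (hqz _ _ (blockPos_snd_le m k)).le) ?_
  have hε0 : Tendsto ε atTop (𝓝 0) := by
    simpa using (tendsto_pow_atTop_nhds_zero_of_lt_one (by norm_num) (by norm_num)).const_mul
      (δ / 4)
  simpa using (hε0.comp (tendsto_blockPos_fst m)).const_mul 4

variable {G' : WGraph V}

lemma exists_cpath_fineStep (hmet : G.IsPathMetric) (hconn : G.Connected)
    (hadj : G'.Adj = G.Adj) (hle : ∀ u v, G.Adj u v → G'.R u v ≤ G.R u v)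
    {x y : Completion V} {u v : V} {δ : ℝ} (hu : dist (u : Completion V) x < δ / 4)
    (hv : dist (v : Completion V) y < δ / 4) (huv : sInf (G'.pathLengths u v) < δ) :
    ∃ γ : G.CPath x y, ∀ k, G'.FineStep δ (γ.p k) (γ.p (k + 1)) := by
  obtain ⟨M, c, hc0, hcM, hc⟩ := G'.exists_fineStep_path (hconn.of_adj_eq hadj u v) huv
  obtain ⟨b, hb0, hb, hbx⟩ := exists_fineStep_ray hmet hconn hu
  obtain ⟨f, hf0, hf, hfy⟩ := exists_fineStep_ray hmet hconn hv
  obtain ⟨g, hg0, hg, hgf⟩ := exists_chain_append hc (fun k => (hf k).of_le hadj hle)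
    (hcM.trans hf0.symm)
  obtain ⟨p, hp, hpb, hpg⟩ := exists_int_chain (S := G'.FineStep δ) (fun _ _ => FineStep.symm)
    (fun k => (hb k).of_le hadj hle) hg (by rw [hb0, hg0, hc0])
  refine ⟨⟨p, fun k => (hp k).imp_right fun h => hadj ▸ h.1, by simpa only [hpb] using hbx, ?_⟩,
    hp⟩
  simpa only [hpg] using (tendsto_add_atTop_iff_nat M).1 (by simpa only [hgf] using hfy)

lemma eq_of_extension_eq_zero (hmet : G.IsPathMetric) (hconn : G.Connected)
    (hw : G.WeaklyConnected) (hadj : G'.Adj = G.Adj)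
    (hle : ∀ u v, G.Adj u v → G'.R u v ≤ G.R u v) {D : Completion V → Completion V → ℝ}
    (hcont : Continuous fun p : Completion V × Completion V => D p.1 p.2)
    (hD : ∀ u v : V, D u v = sInf (G'.pathLengths u v)) {x y : Completion V}
    (hxy : D x y = 0) : x = y := by
  by_contra hne
  obtain ⟨W, hWfin, hWE, hWγ⟩ := hw x y hne
  obtain ⟨δ, hδ, hδW⟩ := G'.exists_pos_le_R_of_finite hWfin (edgeSet_eq_of_adj_eq hadj ▸ hWE)
  have hopen : IsOpen {q : Completion V × Completion V |
      D q.1 q.2 < δ ∧ dist q.1 x < δ / 4 ∧ dist q.2 y < δ / 4} :=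
    (isOpen_lt hcont continuous_const).inter
      ((isOpen_lt (continuous_fst.dist continuous_const) continuous_const).inter
        (isOpen_lt (continuous_snd.dist continuous_const) continuous_const))
  obtain ⟨⟨u, v⟩, huv, hu, hv⟩ :=
    (Completion.denseRange_coe.prodMap Completion.denseRange_coe).exists_mem_open hopen
      ⟨(x, y), by simp [hxy, hδ]⟩
  obtain ⟨γ, hγ⟩ := exists_cpath_fineStep hmet hconn hadj hle hu hv (hD u v ▸ huv)
  obtain ⟨_, he, k, hk, rfl⟩ := hWγ γ
  exact ((hγ k).resolve_left hk).2.not_ge (hδW _ _ he)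

end WGraph

theorem smaller_weights_metric_general {V : Type*} [MetricSpace V]
    (G : WGraph V) (hmet : G.IsPathMetric) (hconn : G.Connected)
    (hw : G.WeaklyConnected)
    (G1 : WGraph V) (hadj : G1.Adj = G.Adj)
    (hle : ∀ u v, G.Adj u v → G1.R u v ≤ G.R u v)
    (D1 : UniformSpace.Completion V → UniformSpace.Completion V → ℝ)
    (hcont : Continuous fun p : UniformSpace.Completion V × UniformSpace.Completion V =>
      D1 p.1 p.2)
    (hD1 : ∀ u v : V, D1 (↑u) (↑v) = sInf (G1.pathLengths u v)) :
    (∀ x y : UniformSpace.Completion V, D1 x y = 0 → x = y) ∧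
      (CompactSpace (UniformSpace.Completion V) →
        ∀ s : Set (UniformSpace.Completion V), IsOpen s ↔
          ∀ x ∈ s, ∃ ε > 0, {y | D1 x y < ε} ⊆ s) := by
  have hnonneg : ∀ x y, 0 ≤ D1 x y := fun x y =>
    Completion.induction_on₂ x y (isClosed_le continuous_const hcont) fun u v =>
      hD1 u v ▸ G1.sInf_pathLengths_nonneg u v
  have hself : ∀ x, D1 x x = 0 := fun x =>
    Completion.induction_on x (isClosed_eq (hcont.comp (continuous_id.prodMk continuous_id))
      continuous_const) fun u => by rw [hD1, G1.sInf_pathLengths_self]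
  have hdef : ∀ x y, D1 x y = 0 → x = y := fun _ _ =>
    WGraph.eq_of_extension_eq_zero hmet hconn hw hadj hle hcont hD1
  exact ⟨hdef, fun _ => isOpen_iff_forall_exists_lt_subset
    (fun x => hcont.comp (Continuous.prodMk_right x)) hself
    fun x y hxy => (hnonneg x y).lt_of_ne' (mt (hdef x y) hxy)⟩

/-- if the completion under `d₀` is weakly connected and `R₁ ≤ R₀`,
then the pseudometric induced on the completion by `R₁` is a metric; if the
completion is moreover compact, it induces the same topology. -/
theorem smaller_weights_metric {V : Type*} [MetricSpace V] [Countable V]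
    (G : WGraph V) (hmet : G.IsPathMetric) (hconn : G.Connected)
    (hw : G.WeaklyConnected)
    (G1 : WGraph V) (hadj : G1.Adj = G.Adj)
    (hle : ∀ u v, G.Adj u v → G1.R u v ≤ G.R u v)
    (D1 : UniformSpace.Completion V → UniformSpace.Completion V → ℝ)
    (hcont : Continuous fun p : UniformSpace.Completion V × UniformSpace.Completion V =>
      D1 p.1 p.2)
    (hD1 : ∀ u v : V, D1 (↑u) (↑v) = sInf (G1.pathLengths u v)) :
    (∀ x y : UniformSpace.Completion V, D1 x y = 0 → x = y) ∧
      (CompactSpace (UniformSpace.Completion V) →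
        ∀ s : Set (UniformSpace.Completion V), IsOpen s ↔
          ∀ x ∈ s, ∃ ε > 0, {y | D1 x y < ε} ⊆ s) :=
  smaller_weights_metric_general G hmet hconn hw G1 hadj hle D1 hcont hD1
end
end

section
/- The algebra 𝔸 of eventually flat functions separates points of the completion Ḡ if and only if Ḡ is weakly connected. Moreover, when Ḡ is weakly connected, for distinct x,y ∈ Ḡ there is φ ∈ 𝔸 with range {0,1}, with φ ≡ 0 on an open neighborhood of x and φ ≡ 1 on an open neighborhood of y. -/
open UniformSpace Filter Topology
open scoped ENNReal

noncomputable section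

/-!
If `φ` is eventually flat, the finitely many edges across which it jumps are met by every path
along which `Φ` is not constant, so a separating `Φ` provides the edge sets required by weak
connectivity.

Conversely, let `W` be a finite set of edges met by every path from `x` to `y`, and `r` the
least resistance of an edge in `W`. Let `φ` be the indicator of the vertices that start a ray
avoiding `W` and converging to `y`. Paths shorter than `r` avoid `W`, so `φ` is constant at
scale `r` (hence extends continuously to `Ḡ`) and jumps only across edges of `W`. Concatenating
ever shorter paths gives a ray to `y` from every vertex within `r / 2` of `y`. A vertex within
`r / 2` of `x` has such a ray to `x`, so it has none to `y`: the two rays would form a path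
from `x` to `y` avoiding `W`.
-/

/-- Successor of the position `(n, j)`, the `j`-th vertex of the `n`-th of a sequence of chains
with `m n` steps each: the last vertex of a chain is followed by the first of the next one. -/
def blockIndexSucc (m : ℕ → ℕ) (i : ℕ × ℕ) : ℕ × ℕ :=
  if i.2 < m i.1 then (i.1, i.2 + 1) else (i.1 + 1, 0)

namespace blockIndexSucc

variable (m : ℕ → ℕ)

lemma snd_le (i : ℕ × ℕ) : (blockIndexSucc m i).2 ≤ m (blockIndexSucc m i).1 := by
  unfold blockIndexSucc
  split_ifs with hlt
  exacts [hlt, Nat.zero_le _]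

lemma fst_le (i : ℕ × ℕ) : i.1 ≤ (blockIndexSucc m i).1 := by
  unfold blockIndexSucc
  split_ifs <;> simp

lemma iterate_to_next_block (n : ℕ) {k : ℕ} (hk : k ≤ m n) :
    (blockIndexSucc m)^[k + 1] (n, m n - k) = (n + 1, 0) := by
  induction k with
  | zero => simp [blockIndexSucc]
  | succ k ih =>
    rw [Function.iterate_succ_apply, ← ih (by omega)]
    congr 2
    simp only [blockIndexSucc]
    rw [if_pos (by omega)]
    congr 1
    omega

lemma exists_iterate_eq (n : ℕ) : ∃ t, (blockIndexSucc m)^[t] (0, 0) = (n, 0) := by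
  induction n with
  | zero => exact ⟨0, rfl⟩
  | succ n ih =>
    obtain ⟨t, ht⟩ := ih
    refine ⟨m n + 1 + t, ?_⟩
    rw [Function.iterate_add_apply, ht, ← iterate_to_next_block m n le_rfl, Nat.sub_self]

lemma tendsto_fst_iterate : Tendsto (fun t => ((blockIndexSucc m)^[t] (0, 0)).1) atTop atTop := by
  have hmono : Monotone (fun t => ((blockIndexSucc m)^[t] (0, 0)).1) :=
    monotone_nat_of_le_succ fun t => by
      rw [Function.iterate_succ_apply']
      exact fst_le m _
  refine tendsto_atTop_atTop.2 fun n => ?_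
  obtain ⟨t, ht⟩ := exists_iterate_eq m n
  exact ⟨t, fun t' ht' => (congrArg Prod.fst ht).symm.le.trans (hmono ht')⟩

end blockIndexSucc

theorem exists_seq_of_chains {α : Type*} {r : α → α → Prop} (hr : ∀ a, r a a)
    {S : ℕ → Set α} (hS : Antitone S) (m : ℕ → ℕ) (q : ℕ → ℕ → α)
    (hjoin : ∀ n, q n (m n) = q (n + 1) 0)
    (hq : ∀ n, ∀ j < m n, r (q n j) (q n (j + 1))) (hqS : ∀ n, ∀ j ≤ m n, q n j ∈ S n) :
    ∃ p : ℕ → α, p 0 = q 0 0 ∧ (∀ t, r (p t) (p (t + 1))) ∧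
      ∀ N, ∀ᶠ t in atTop, p t ∈ S N := by
  set ι : ℕ → ℕ × ℕ := fun t => (blockIndexSucc m)^[t] (0, 0)
  have hι : ∀ t, (ι t).2 ≤ m (ι t).1
    | 0 => Nat.zero_le _
    | t + 1 => by
      simpa only [ι, Function.iterate_succ_apply'] using blockIndexSucc.snd_le m _
  refine ⟨fun t => q (ι t).1 (ι t).2, rfl, fun t => ?_, fun N => ?_⟩
  · have hj := hι t
    simp only [ι, Function.iterate_succ_apply'] at hj ⊢
    generalize (blockIndexSucc m)^[t] (0, 0) = i at hj ⊢
    obtain ⟨n, j⟩ := i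
    unfold blockIndexSucc
    split_ifs with hlt
    · exact hq n j hlt
    · rw [← hjoin, show j = m n by dsimp only at hj hlt; omega]
      exact hr _
  · filter_upwards [(blockIndexSucc.tendsto_fst_iterate m).eventually_ge_atTop N] with t ht
    exact hS ht (hqS _ _ (hι t))

namespace UniformSpace.Completion

variable {α β : Type*} [UniformSpace α] [UniformSpace β] [CompleteSpace β] {f : α → β}

lemma range_extension_subset [T0Space β] (hf : UniformContinuous f) {C : Set β} (hC : IsClosed C)
    (hfC : Set.range f ⊆ C) : Set.range (Completion.extension f) ⊆ C := by
  rintro _ ⟨z, rfl⟩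
  induction z using Completion.induction_on with
  | hp => exact hC.preimage continuous_extension
  | ih a => exact extension_coe hf a ▸ hfC ⟨a, rfl⟩

lemma eqOn_extension_of_forall_coe [T2Space β] (hf : UniformContinuous f)
    {U : Set (Completion α)} (hU : IsOpen U) {c : β}
    (h : ∀ a : α, (a : Completion α) ∈ U → f a = c) :
    Set.EqOn (Completion.extension f) (fun _ => c) U := by
  refine Set.EqOn.of_subset_closure (s := U ∩ Set.range ((↑) : α → Completion α)) ?_
    continuous_extension.continuousOn continuousOn_const Set.inter_subset_left
    (denseRange_coe.open_subset_closure_inter hU)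
  rintro _ ⟨hU, a, rfl⟩
  rw [extension_coe hf]
  exact h a hU

end UniformSpace.Completion

namespace WGraph

variable {V : Type*} (G : WGraph V)

lemma pathLengths_nonneg {u v : V} {L : ℝ} (hL : L ∈ G.pathLengths u v) : 0 ≤ L := by
  obtain ⟨n, p, -, -, hadj, rfl⟩ := hL
  exact Finset.sum_nonneg fun k hk => (G.Rpos _ _ (hadj k (Finset.mem_range.mp hk))).le

lemma exists_pos_le_R {W : Set (Sym2 V)} (hW : W.Finite) (hWG : W ⊆ G.edgeSet) :
    ∃ r > 0, ∀ u v : V, s(u, v) ∈ W → r ≤ G.R u v := by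
  set R' : Sym2 V → ℝ := Sym2.lift ⟨G.R, G.Rsymm⟩
  have hpos : ∀ e ∈ W, 0 < R' e := by
    rintro _ he
    obtain ⟨u, v, huv, rfl⟩ := hWG he
    exact G.Rpos u v huv
  have hsmall : ∀ᶠ r in 𝓝[>] (0 : ℝ), 0 < r ∧ ∀ e ∈ W, r ≤ R' e :=
    eventually_mem_nhdsWithin.and <| nhdsWithin_le_nhds <|
      hW.eventually_all.2 fun e he => eventually_le_nhds (hpos e he)
  obtain ⟨r, hr, hrW⟩ := hsmall.exists
  exact ⟨r, hr, fun u v h => hrW _ h⟩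

lemma eventuallyFlat_of_finite {W : Set (Sym2 V)} (hW : W.Finite) {φ : V → ℝ}
    (h : ∀ u v : V, G.Adj u v → φ u ≠ φ v → s(u, v) ∈ W) : G.EventuallyFlat φ := by
  refine (hW.preimage' fun e _ => ?_).subset fun p hp => h p.1 p.2 hp.1 hp.2
  induction e using Sym2.ind with
  | _ a b =>
    refine ((Set.finite_singleton (a, b)).insert (b, a)).subset ?_
    rintro ⟨u, w⟩ huw
    rcases Sym2.eq_iff.1 huw with ⟨rfl, rfl⟩ | ⟨rfl, rfl⟩ <;> simp

def AvoidingStep (W : Set (Sym2 V)) (u v : V) : Prop :=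
  u = v ∨ (G.Adj u v ∧ s(u, v) ∉ W)

variable {G} in
lemma AvoidingStep.symm {W : Set (Sym2 V)} {u v : V} (h : G.AvoidingStep W u v) :
    G.AvoidingStep W v u :=
  h.imp Eq.symm fun ⟨huv, hW⟩ => ⟨G.symm _ _ huv, by rwa [Sym2.eq_swap]⟩

variable [MetricSpace V]

lemma dist_le_of_path (hmet : G.IsPathMetric) {n : ℕ} {q : ℕ → V}
    (hadj : ∀ k < n, G.Adj (q k) (q (k + 1))) {i : ℕ} (hi : i ≤ n) :
    dist (q 0) (q i) ≤ ∑ k ∈ Finset.range n, G.R (q k) (q (k + 1)) := by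
  have hR : ∀ k ∈ Finset.range n, 0 ≤ G.R (q k) (q (k + 1)) := fun k hk =>
    (G.Rpos _ _ (hadj k (Finset.mem_range.mp hk))).le
  calc dist (q 0) (q i) ≤ ∑ k ∈ Finset.range i, G.R (q k) (q (k + 1)) := by
        rw [hmet]
        exact csInf_le ⟨0, fun L hL => G.pathLengths_nonneg hL⟩
          ⟨i, q, rfl, rfl, fun k hk => hadj k (hk.trans_le hi), rfl⟩
    _ ≤ _ := Finset.sum_le_sum_of_subset_of_nonneg (Finset.range_subset_range.mpr hi)
        fun k hk _ => hR k hk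

/-- A path shorter than every edge of `W` cannot cross `W`. -/
lemma exists_avoidingPath (hmet : G.IsPathMetric) (hconn : G.Connected)
    {W : Set (Sym2 V)} {r c : ℝ} (hrW : ∀ u v : V, s(u, v) ∈ W → r ≤ G.R u v)
    (hcr : c ≤ r) {u v : V} (huv : dist u v < c) :
    ∃ (n : ℕ) (q : ℕ → V), q 0 = u ∧ q n = v ∧
      (∀ k < n, G.AvoidingStep W (q k) (q (k + 1))) ∧ ∀ k ≤ n, dist u (q k) < c := by
  obtain ⟨L, ⟨n, q, rfl, rfl, hadj, rfl⟩, hL⟩ :=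
    exists_lt_of_csInf_lt (hconn u v) (hmet u v ▸ huv)
  refine ⟨n, q, rfl, rfl, fun k hk => Or.inr ⟨hadj k hk, fun hkW => ?_⟩,
    fun k hk => (G.dist_le_of_path hmet hadj hk).trans_lt hL⟩
  have hle : G.R (q k) (q (k + 1)) ≤ ∑ j ∈ Finset.range n, G.R (q j) (q (j + 1)) :=
    Finset.single_le_sum (fun j hj => (G.Rpos _ _ (hadj j (Finset.mem_range.mp hj))).le)
      (Finset.mem_range.mpr hk)
  linarith [hrW _ _ hkW]

def RayTo (W : Set (Sym2 V)) (y : Completion V) (v : V) : Prop :=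
  ∃ p : ℕ → V, p 0 = v ∧ (∀ k, G.AvoidingStep W (p k) (p (k + 1))) ∧
    Tendsto (fun n => (p n : Completion V)) atTop (𝓝 y)

variable {G}

lemma RayTo.cons {W : Set (Sym2 V)} {y : Completion V} {u v : V} (h : G.AvoidingStep W u v)
    (hv : G.RayTo W y v) : G.RayTo W y u := by
  obtain ⟨p, rfl, hp, hlim⟩ := hv
  refine ⟨fun n => if n = 0 then u else p (n - 1), rfl, fun k => ?_,
    (tendsto_add_atTop_iff_nat 1).1 (by simpa using hlim)⟩
  rcases k with _ | k
  · simpa using h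
  · simpa using hp k

lemma rayTo_iff_of_avoidingStep {W : Set (Sym2 V)} {y : Completion V} {u v : V}
    (h : G.AvoidingStep W u v) : G.RayTo W y u ↔ G.RayTo W y v :=
  ⟨RayTo.cons h.symm, RayTo.cons h⟩

lemma rayTo_iff_of_path {W : Set (Sym2 V)} {y : Completion V} {n : ℕ} {q : ℕ → V}
    (h : ∀ k < n, G.AvoidingStep W (q k) (q (k + 1))) :
    G.RayTo W y (q 0) ↔ G.RayTo W y (q n) := by
  induction n with
  | zero => rfl
  | succ n ih =>
    exact (ih fun k hk => h k (hk.trans n.lt_succ_self)).trans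
      (rayTo_iff_of_avoidingStep (h n n.lt_succ_self))

lemma exists_cPath_of_rayTo {W : Set (Sym2 V)} {x y : Completion V} {v : V}
    (hx : G.RayTo W x v) (hy : G.RayTo W y v) :
    ∃ γ : G.CPath x y, ∀ e ∈ W, ¬ γ.uses e := by
  obtain ⟨a, rfl, ha, halim⟩ := hx
  obtain ⟨b, hb0, hb, hblim⟩ := hy
  set p : ℤ → V := fun k => if 0 ≤ k then b k.toNat else a (-k).toNat
  have hstep : ∀ k : ℤ, G.AvoidingStep W (p k) (p (k + 1)) := by
    intro k
    rcases le_or_gt 0 k with hk | hk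
    · simpa [p, hk, show 0 ≤ k + 1 by omega, show (k + 1).toNat = k.toNat + 1 by omega]
        using hb k.toNat
    · rcases eq_or_ne (k + 1) 0 with hk1 | hk1
      · simpa [p, hk1, show k = -1 by omega, hb0] using (ha 0).symm
      · simpa [p, show ¬ 0 ≤ k by omega, show ¬ 0 ≤ k + 1 by omega,
          show (-k).toNat = (-(k + 1)).toNat + 1 by omega] using (ha (-(k + 1)).toNat).symm
  refine ⟨⟨p, fun k => (hstep k).imp id And.left, halim.congr fun n => ?_,
    hblim.congr fun n => by simp [p]⟩, ?_⟩
  · rcases n with _ | n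
    · simp [p, hb0]
    · simp only [p]
      rw [if_neg (by omega)]
      simp
  · rintro e heW ⟨k, hne, rfl⟩
    exact ((hstep k).resolve_left hne).2 heW

variable (G) in
/-- The ray joins vertices `w n` with `d(w n, y) < r / 2 ^ (n + 1)` by paths shorter than
`r / 2 ^ n`. -/
lemma rayTo_of_dist_lt (hmet : G.IsPathMetric) (hconn : G.Connected) {W : Set (Sym2 V)}
    {r : ℝ} (hr : 0 < r) (hrW : ∀ u v : V, s(u, v) ∈ W → r ≤ G.R u v) {y : Completion V}
    {v : V} (hv : dist (v : Completion V) y < r / 2) : G.RayTo W y v := by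
  set ρ := r / 2 with hρ
  have hρ0 : 0 < ρ := half_pos hr
  have hw : ∀ n, ∃ w : V, dist (w : Completion V) y < ρ / 2 ^ n ∧ (n = 0 → w = v) := by
    rintro (_ | n)
    · exact ⟨v, by simpa using hv, fun _ => rfl⟩
    · obtain ⟨w, hw⟩ := Completion.denseRange_coe.exists_dist_lt y
        (by positivity : 0 < ρ / 2 ^ (n + 1))
      exact ⟨w, by rwa [dist_comm], fun h => absurd h n.succ_ne_zero⟩
  choose w hwy hw0 using hw
  have hchain : ∀ n, ∃ (m : ℕ) (q : ℕ → V), q 0 = w n ∧ q m = w (n + 1) ∧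
      (∀ k < m, G.AvoidingStep W (q k) (q (k + 1))) ∧
      ∀ k ≤ m, dist (w n) (q k) < 2 * ρ / 2 ^ n := by
    intro n
    refine G.exists_avoidingPath hmet hconn hrW ?_ ?_
    · rw [hρ, mul_div_cancel₀ _ two_ne_zero]
      exact div_le_self hr.le (one_le_pow₀ one_le_two)
    · rw [← Completion.dist_eq]
      calc _ ≤ dist (w n : Completion V) y + dist (w (n + 1) : Completion V) y :=
            dist_triangle_right _ _ _
        _ < ρ / 2 ^ n + ρ / 2 ^ (n + 1) := add_lt_add (hwy n) (hwy (n + 1))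
        _ ≤ 2 * ρ / 2 ^ n := by
            rw [pow_succ, ← div_div, mul_div_assoc]
            linarith [div_pos hρ0 (pow_pos two_pos n)]
  choose m q hq0 hqm hq hqw using hchain
  set S : ℕ → Set V := fun n => {u | dist (u : Completion V) y < 3 * ρ / 2 ^ n}
  have hS : Antitone S := fun i j hij u (hu : dist (u : Completion V) y < 3 * ρ / 2 ^ j) =>
    hu.trans_le (div_le_div_of_nonneg_left (by positivity) (by positivity)
      (pow_le_pow_right₀ one_le_two hij))
  have hqS : ∀ n, ∀ k ≤ m n, q n k ∈ S n := fun n k hk =>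
    calc dist (q n k : Completion V) y
        ≤ dist (q n k : Completion V) (w n) + dist (w n : Completion V) y := dist_triangle _ _ _
      _ < 2 * ρ / 2 ^ n + ρ / 2 ^ n := by
          rw [Completion.dist_eq, dist_comm]
          exact add_lt_add (hqw n k hk) (hwy n)
      _ = 3 * ρ / 2 ^ n := by ring
  obtain ⟨p, hp0, hp, hpS⟩ := exists_seq_of_chains (r := G.AvoidingStep W) (fun _ => Or.inl rfl)
    hS m q (fun n => (hqm n).trans (hq0 (n + 1)).symm) hq hqS
  refine ⟨p, by rw [hp0, hq0, hw0 0 rfl], hp, Metric.tendsto_nhds.2 fun ε hε => ?_⟩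
  have hlim : Tendsto (fun n : ℕ => 3 * ρ / 2 ^ n) atTop (𝓝 0) :=
    tendsto_const_nhds.div_atTop (tendsto_pow_atTop_atTop_of_one_lt one_lt_two)
  obtain ⟨N, hN⟩ := (hlim.eventually (gt_mem_nhds hε)).exists
  exact (hpS N).mono fun t ht => ht.trans hN

lemma CPath.apply_eq_apply {β : Type*} [TopologicalSpace β] [T2Space β] {x y : Completion V}
    (γ : G.CPath x y) {Φ : Completion V → β} (hΦ : Continuous Φ)
    (h : ∀ k, Φ (γ.p k) = Φ (γ.p (k + 1))) : Φ x = Φ y := by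
  have hconst : ∀ k, Φ (γ.p k) = Φ (γ.p 0) := fun k => by
    induction k using Int.induction_on with
    | zero => rfl
    | succ i ih => rw [← h i, ih]
    | pred i ih => rw [h, sub_add_cancel, ih]
  have hx := (hΦ.tendsto x).comp γ.tendsto_left
  have hy := (hΦ.tendsto y).comp γ.tendsto_right
  simp only [Function.comp_def, hconst] at hx hy
  exact (tendsto_nhds_unique hx tendsto_const_nhds).trans
    (tendsto_nhds_unique hy tendsto_const_nhds).symm

end WGraph

namespace WGraph

variable {V : Type*} [MetricSpace V] (G : WGraph V)

theorem weaklyConnected_of_separates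
    (hsep : ∀ x y : Completion V, x ≠ y → ∃ (φ : V → ℝ) (Φ : Completion V → ℝ),
      G.EventuallyFlat φ ∧ Continuous Φ ∧ (∀ v : V, Φ ↑v = φ v) ∧ Φ x ≠ Φ y) :
    G.WeaklyConnected := by
  intro x y hxy
  obtain ⟨φ, Φ, hflat, hΦ, hΦφ, hne⟩ := hsep x y hxy
  refine ⟨(fun p : V × V => s(p.1, p.2)) '' {p | G.Adj p.1 p.2 ∧ φ p.1 ≠ φ p.2},
    hflat.image _, ?_, fun γ => ?_⟩
  · rintro _ ⟨⟨u, v⟩, ⟨huv, -⟩, rfl⟩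
    exact ⟨u, v, huv, rfl⟩
  · by_contra! hγ
    refine hne (γ.apply_eq_apply hΦ fun k => ?_)
    rw [hΦφ, hΦφ]
    by_contra hk
    have hmove : γ.p k ≠ γ.p (k + 1) := fun h => hk (by rw [h])
    exact hγ _ ⟨(γ.p k, γ.p (k + 1)), ⟨(γ.step k).resolve_left hmove, hk⟩, rfl⟩
      ⟨k, hmove, rfl⟩

theorem exists_indicator_separating (hmet : G.IsPathMetric) (hconn : G.Connected)
    (hwc : G.WeaklyConnected) {x y : Completion V} (hxy : x ≠ y) :
    ∃ (φ : V → ℝ) (Φ : Completion V → ℝ),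
      G.EventuallyFlat φ ∧ Continuous Φ ∧ (∀ v : V, Φ ↑v = φ v) ∧
      Set.range Φ ⊆ {0, 1} ∧ (∀ᶠ z in 𝓝 x, Φ z = 0) ∧ (∀ᶠ z in 𝓝 y, Φ z = 1) := by
  obtain ⟨W, hWfin, hWG, hW⟩ := hwc x y hxy
  obtain ⟨r, hr, hrW⟩ := G.exists_pos_le_R hWfin hWG
  classical
  set φ : V → ℝ := fun v => if G.RayTo W y v then 1 else 0
  have hstep : ∀ {u v : V}, G.AvoidingStep W u v → φ u = φ v := fun h => by
    simp only [φ, rayTo_iff_of_avoidingStep h]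
  have hscale : ∀ u v : V, dist u v < r → φ u = φ v := fun u v huv => by
    obtain ⟨n, q, rfl, rfl, hq, -⟩ := G.exists_avoidingPath hmet hconn hrW le_rfl huv
    simp only [φ, rayTo_iff_of_path hq]
  have hnearY : ∀ v : V, dist (v : Completion V) y < r / 2 → φ v = 1 := fun v hv =>
    if_pos (G.rayTo_of_dist_lt hmet hconn hr hrW hv)
  have hnearX : ∀ v : V, dist (v : Completion V) x < r / 2 → φ v = 0 := fun v hv =>
    if_neg fun hvy => by
      obtain ⟨γ, hγ⟩ := exists_cPath_of_rayTo (G.rayTo_of_dist_lt hmet hconn hr hrW hv) hvy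
      obtain ⟨e, heW, he⟩ := hW γ
      exact hγ e heW he
  have hφ : UniformContinuous φ := Metric.uniformContinuous_iff.2 fun ε hε =>
    ⟨r, hr, fun {_ _} h => by rwa [hscale _ _ h, dist_self]⟩
  have hflat : G.EventuallyFlat φ := G.eventuallyFlat_of_finite hWfin fun u v huv hne => by
    by_contra hnW
    exact hne (hstep (Or.inr ⟨huv, hnW⟩))
  have hrange : Set.range φ ⊆ {0, 1} := by
    rintro _ ⟨v, rfl⟩
    by_cases hv : G.RayTo W y v <;> simp [φ, hv]
  refine ⟨φ, Completion.extension φ, hflat, Completion.continuous_extension,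
    Completion.extension_coe hφ,
    Completion.range_extension_subset hφ ((Set.finite_singleton 1).insert 0).isClosed hrange,
    ?_, ?_⟩
  · exact Filter.mem_of_superset (Metric.ball_mem_nhds x (half_pos hr))
      (Completion.eqOn_extension_of_forall_coe hφ Metric.isOpen_ball hnearX)
  · exact Filter.mem_of_superset (Metric.ball_mem_nhds y (half_pos hr))
      (Completion.eqOn_extension_of_forall_coe hφ Metric.isOpen_ball hnearY)

end WGraph

theorem separation_iff_weaklyConnected_general {V : Type*} [MetricSpace V]
    (G : WGraph V) (hmet : G.IsPathMetric) (hconn : G.Connected) :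
    ((∀ x y : UniformSpace.Completion V, x ≠ y →
        ∃ (φ : V → ℝ) (Φ : UniformSpace.Completion V → ℝ),
          G.EventuallyFlat φ ∧ Continuous Φ ∧ (∀ v : V, Φ ↑v = φ v) ∧ Φ x ≠ Φ y) ↔
      G.WeaklyConnected) ∧
    (G.WeaklyConnected → ∀ x y : UniformSpace.Completion V, x ≠ y →
      ∃ (φ : V → ℝ) (Φ : UniformSpace.Completion V → ℝ),
        G.EventuallyFlat φ ∧ Continuous Φ ∧ (∀ v : V, Φ ↑v = φ v) ∧
        Set.range Φ ⊆ {0, 1} ∧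
        (∀ᶠ z in nhds x, Φ z = 0) ∧ (∀ᶠ z in nhds y, Φ z = 1)) := by
  refine ⟨⟨G.weaklyConnected_of_separates, fun hwc x y hxy => ?_⟩,
    fun hwc x y hxy => G.exists_indicator_separating hmet hconn hwc hxy⟩
  obtain ⟨φ, Φ, hflat, hΦ, hΦφ, -, hx, hy⟩ :=
    G.exists_indicator_separating hmet hconn hwc hxy
  exact ⟨φ, Φ, hflat, hΦ, hΦφ, by rw [hx.self_of_nhds, hy.self_of_nhds]; norm_num⟩

/-- the eventually flat functions separate the points of the
completion iff the completion is weakly connected; in the weakly connected case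
the separating function can be taken with range `{0,1}`, vanishing near one
point and equal to `1` near the other. -/
theorem separation_iff_weaklyConnected {V : Type*} [MetricSpace V] [Countable V]
    (G : WGraph V) (hmet : G.IsPathMetric) (hconn : G.Connected) :
    ((∀ x y : UniformSpace.Completion V, x ≠ y →
        ∃ (φ : V → ℝ) (Φ : UniformSpace.Completion V → ℝ),
          G.EventuallyFlat φ ∧ Continuous Φ ∧ (∀ v : V, Φ ↑v = φ v) ∧ Φ x ≠ Φ y) ↔
      G.WeaklyConnected) ∧
    (G.WeaklyConnected → ∀ x y : UniformSpace.Completion V, x ≠ y →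
      ∃ (φ : V → ℝ) (Φ : UniformSpace.Completion V → ℝ),
        G.EventuallyFlat φ ∧ Continuous Φ ∧ (∀ v : V, Φ ↑v = φ v) ∧
        Set.range Φ ⊆ {0, 1} ∧
        (∀ᶠ z in nhds x, Φ z = 0) ∧ (∀ᶠ z in nhds y, Φ z = 1)) :=
  separation_iff_weaklyConnected_general G hmet hconn
end
end
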